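/- (Approximate OS-VI for policy evaluation, sup-norm error propagation) If V_k = S^π V_{k-1} + ε_k with ‖ε_k‖_∞ ≤ ε for all k ≥ 1, and γ' = (γ/(1-γ))‖P^π - P̂^π‖_∞ < 1, then for all k ≥ 0: ‖V^π - V_k‖_∞ ≤ γ'^k ‖V^π - V_0‖_∞ + ((1-γ'^k)/(1-γ')) ε. -/

import Mathlib

/-!
`V^π` is a fixed point of `S^π`, and `S^π` is a `γ'`-contraction for the sup norm:
`S^π V - S^π W = γ (I - γ P̂)⁻¹ (P - P̂) (V - W)`, and `‖(I - γ P̂)⁻¹ w‖ ≤ ‖w‖ / (1 - γ)` because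
`u = (I - γ P̂) u + γ P̂ u` with `‖P̂ u‖ ≤ ‖u‖` for a stochastic `P̂`. Hence the errors
`a_k = ‖V^π - V_k‖` satisfy `a_{k+1} ≤ γ' a_k + ε`, which unrolls to the geometric bound.
-/

open Matrix

/-- Supremum norm on vectors. -/
noncomputable def vnorm {d : ℕ} (v : Fin d → ℝ) : ℝ := ⨆ i, |v i|

/-- Maximum absolute row sum: the operator norm induced by the supremum norm. -/
noncomputable def mnorm {d : ℕ} (M : Matrix (Fin d) (Fin d) ℝ) : ℝ :=
  ⨆ i, ∑ j, |M i j|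

/-- A row-stochastic matrix: nonnegative entries, rows summing to one. -/
def RowStochastic {d : ℕ} (P : Matrix (Fin d) (Fin d) ℝ) : Prop :=
  (∀ i j, 0 ≤ P i j) ∧ ∀ i, ∑ j, P i j = 1

/-- The Varga operator `S^π V = (I - γ P̂)⁻¹ (r + γ (P - P̂) V)`. -/
noncomputable def varga {d : ℕ} (γ : ℝ) (P Phat : Matrix (Fin d) (Fin d) ℝ)
    (r V : Fin d → ℝ) : Fin d → ℝ :=
  ((1 - γ • Phat)⁻¹).mulVec (r + γ • ((P - Phat).mulVec V))

/-- The value function `V^π = (I - γ P)⁻¹ r`. -/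
noncomputable def valueFn {d : ℕ} (γ : ℝ) (P : Matrix (Fin d) (Fin d) ℝ)
    (r : Fin d → ℝ) : Fin d → ℝ :=
  ((1 - γ • P)⁻¹).mulVec r

theorem pi_norm_eq_iSup {ι : Type*} [Fintype ι] {E : ι → Type*}
    [∀ i, SeminormedAddCommGroup (E i)] (f : ∀ i, E i) : ‖f‖ = ⨆ i, ‖f i‖ :=
  le_antisymm
    ((pi_norm_le_iff_of_nonneg (Real.iSup_nonneg fun i => norm_nonneg (f i))).2 fun i =>
      le_ciSup (Set.finite_range fun i => ‖f i‖).bddAbove i)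
    (Real.iSup_le (norm_le_pi_norm f) (norm_nonneg f))

theorem vnorm_eq_norm {d : ℕ} (v : Fin d → ℝ) : vnorm v = ‖v‖ := by
  simp only [vnorm, pi_norm_eq_iSup, Real.norm_eq_abs]

section LinftyOp

attribute [local instance] Matrix.linftyOpNormedAddCommGroup

theorem mnorm_eq_norm {d : ℕ} (M : Matrix (Fin d) (Fin d) ℝ) : mnorm M = ‖M‖ := by
  change _ = ‖fun i => WithLp.toLp 1 (M i)‖
  simp only [mnorm, pi_norm_eq_iSup, PiLp.norm_eq_of_L1, Real.norm_eq_abs]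

theorem norm_mulVec_le_mnorm_mul {d : ℕ} (M : Matrix (Fin d) (Fin d) ℝ) (x : Fin d → ℝ) :
    ‖M *ᵥ x‖ ≤ mnorm M * ‖x‖ :=
  mnorm_eq_norm M ▸ linfty_opNorm_mulVec M x

theorem mnorm_nonneg {d : ℕ} (M : Matrix (Fin d) (Fin d) ℝ) : 0 ≤ mnorm M :=
  mnorm_eq_norm M ▸ norm_nonneg M

end LinftyOp

namespace RowStochastic

variable {d : ℕ} {P : Matrix (Fin d) (Fin d) ℝ} {γ : ℝ}

theorem mnorm_le_one (hP : RowStochastic P) : mnorm P ≤ 1 := by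
  refine Real.iSup_le (fun i => ?_) zero_le_one
  rw [← hP.2 i]
  exact (Finset.sum_congr rfl fun j _ => abs_of_nonneg (hP.1 i j)).le

theorem norm_mulVec_le (hP : RowStochastic P) (x : Fin d → ℝ) : ‖P *ᵥ x‖ ≤ ‖x‖ :=
  (norm_mulVec_le_mnorm_mul P x).trans
    (mul_le_of_le_one_left (norm_nonneg x) hP.mnorm_le_one)

theorem mul_norm_le_norm_one_sub_smul_mulVec (hP : RowStochastic P) (hγ0 : 0 ≤ γ)
    (u : Fin d → ℝ) : (1 - γ) * ‖u‖ ≤ ‖(1 - γ • P) *ᵥ u‖ := by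
  have hu : u = (1 - γ • P) *ᵥ u + γ • P *ᵥ u := by
    rw [sub_mulVec, one_mulVec, smul_mulVec, sub_add_cancel]
  have : ‖u‖ ≤ ‖(1 - γ • P) *ᵥ u‖ + γ * ‖u‖ :=
    calc ‖u‖ = ‖(1 - γ • P) *ᵥ u + γ • P *ᵥ u‖ := congrArg norm hu
      _ ≤ ‖(1 - γ • P) *ᵥ u‖ + γ * ‖P *ᵥ u‖ := by
        grw [norm_add_le, norm_smul, Real.norm_of_nonneg hγ0]
      _ ≤ ‖(1 - γ • P) *ᵥ u‖ + γ * ‖u‖ := by gcongr; exact hP.norm_mulVec_le u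
  linarith

theorem isUnit_det_one_sub_smul (hP : RowStochastic P) (hγ0 : 0 ≤ γ) (hγ1 : γ < 1) :
    IsUnit (1 - γ • P).det := by
  refine isUnit_iff_ne_zero.2 fun hdet => ?_
  obtain ⟨v, hv0, hv⟩ := exists_mulVec_eq_zero_iff.2 hdet
  have : (1 - γ) * ‖v‖ ≤ 0 := by
    simpa [hv] using hP.mul_norm_le_norm_one_sub_smul_mulVec hγ0 v
  exact hv0 (norm_le_zero_iff.1 (nonpos_of_mul_nonpos_right this (by linarith)))

theorem norm_inv_one_sub_smul_mulVec_le (hP : RowStochastic P) (hγ0 : 0 ≤ γ) (hγ1 : γ < 1)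
    (w : Fin d → ℝ) : ‖(1 - γ • P)⁻¹ *ᵥ w‖ ≤ ‖w‖ / (1 - γ) := by
  rw [le_div_iff₀ (by linarith), mul_comm]
  have h := hP.mul_norm_le_norm_one_sub_smul_mulVec hγ0 ((1 - γ • P)⁻¹ *ᵥ w)
  rwa [mulVec_mulVec, mul_nonsing_inv _ (hP.isUnit_det_one_sub_smul hγ0 hγ1), one_mulVec] at h

end RowStochastic

section Varga

variable {d : ℕ} {γ : ℝ} {P Phat : Matrix (Fin d) (Fin d) ℝ}

theorem varga_valueFn (hγ0 : 0 ≤ γ) (hγ1 : γ < 1) (hP : RowStochastic P)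
    (hPhat : RowStochastic Phat) (r : Fin d → ℝ) :
    varga γ P Phat r (valueFn γ P r) = valueFn γ P r := by
  have hr : (1 - γ • P) *ᵥ valueFn γ P r = r := by
    rw [valueFn, mulVec_mulVec, mul_nonsing_inv _ (hP.isUnit_det_one_sub_smul hγ0 hγ1),
      one_mulVec]
  have hsplit : r + γ • (P - Phat) *ᵥ valueFn γ P r = (1 - γ • Phat) *ᵥ valueFn γ P r := by
    generalize valueFn γ P r = v at hr ⊢
    subst hr
    simp only [sub_mulVec, one_mulVec, smul_mulVec]
    module
  rw [varga, hsplit, mulVec_mulVec,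
    nonsing_inv_mul _ (hPhat.isUnit_det_one_sub_smul hγ0 hγ1), one_mulVec]

theorem varga_sub_varga (r x y : Fin d → ℝ) :
    varga γ P Phat r x - varga γ P Phat r y =
      (1 - γ • Phat)⁻¹ *ᵥ (γ • (P - Phat) *ᵥ (x - y)) := by
  rw [varga, varga, ← mulVec_sub, add_sub_add_left_eq_sub, ← smul_sub, ← mulVec_sub]

theorem norm_varga_sub_varga_le (hγ0 : 0 ≤ γ) (hγ1 : γ < 1) (hPhat : RowStochastic Phat)
    (r x y : Fin d → ℝ) :
    ‖varga γ P Phat r x - varga γ P Phat r y‖ ≤ γ / (1 - γ) * mnorm (P - Phat) * ‖x - y‖ :=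
  calc ‖varga γ P Phat r x - varga γ P Phat r y‖
      ≤ ‖γ • (P - Phat) *ᵥ (x - y)‖ / (1 - γ) := by
        rw [varga_sub_varga]
        exact hPhat.norm_inv_one_sub_smul_mulVec_le hγ0 hγ1 _
    _ ≤ γ * (mnorm (P - Phat) * ‖x - y‖) / (1 - γ) := by
        rw [norm_smul, Real.norm_of_nonneg hγ0]
        gcongr
        exact norm_mulVec_le_mnorm_mul _ _
    _ = γ / (1 - γ) * mnorm (P - Phat) * ‖x - y‖ := by ring

end Varga

theorem le_pow_mul_add_of_le_mul_add {a : ℕ → ℝ} {q e : ℝ} (hq0 : 0 ≤ q) (hq1 : q ≠ 1)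
    (h : ∀ k, a (k + 1) ≤ q * a k + e) (k : ℕ) :
    a k ≤ q ^ k * a 0 + (1 - q ^ k) / (1 - q) * e := by
  induction k with
  | zero => simp
  | succ k ih =>
    have hq : 1 - q ≠ 0 := sub_ne_zero.2 hq1.symm
    calc a (k + 1) ≤ q * (q ^ k * a 0 + (1 - q ^ k) / (1 - q) * e) + e := by
          grw [h k, ih]
      _ = q ^ (k + 1) * a 0 + (1 - q ^ (k + 1)) / (1 - q) * e := by
          field_simp
          ring

theorem norm_sub_perturbed_iterate_le {E : Type*} [SeminormedAddCommGroup E] {T : E → E}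
    {x : ℕ → E} {ε : ℕ → E} {z : E} {q e : ℝ} (hq0 : 0 ≤ q) (hq1 : q ≠ 1)
    (hz : T z = z) (hT : ∀ y y', ‖T y - T y'‖ ≤ q * ‖y - y'‖)
    (hx : ∀ k, x (k + 1) = T (x k) + ε (k + 1)) (hε : ∀ k, ‖ε (k + 1)‖ ≤ e) (k : ℕ) :
    ‖z - x k‖ ≤ q ^ k * ‖z - x 0‖ + (1 - q ^ k) / (1 - q) * e := by
  refine le_pow_mul_add_of_le_mul_add (a := fun k => ‖z - x k‖) hq0 hq1 (fun k => ?_) k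
  calc ‖z - x (k + 1)‖ = ‖(T z - T (x k)) - ε (k + 1)‖ := by rw [hx, hz, sub_add_eq_sub_sub]
    _ ≤ q * ‖z - x k‖ + e := by grw [norm_sub_le, hT, hε]

/-- Approximate OS-VI for policy evaluation, sup-norm error propagation
(Theorem 1, `⋆ = ∞`). -/
theorem osvi_pe_error_propagation_sup {d : ℕ} (γ : ℝ) (hγ0 : 0 ≤ γ) (hγ1 : γ < 1)
    (P Phat : Matrix (Fin d) (Fin d) ℝ)
    (hP : RowStochastic P) (hPhat : RowStochastic Phat)
    (r : Fin d → ℝ)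
    (V : ℕ → Fin d → ℝ) (ε : ℕ → Fin d → ℝ) (e : ℝ)
    (hV : ∀ k, V (k + 1) = varga γ P Phat r (V k) + ε (k + 1))
    (hε : ∀ k, 1 ≤ k → vnorm (ε k) ≤ e)
    (hγ' : γ / (1 - γ) * mnorm (P - Phat) < 1) :
    ∀ k, vnorm (valueFn γ P r - V k) ≤
      (γ / (1 - γ) * mnorm (P - Phat)) ^ k * vnorm (valueFn γ P r - V 0) +
        (1 - (γ / (1 - γ) * mnorm (P - Phat)) ^ k) /
          (1 - γ / (1 - γ) * mnorm (P - Phat)) * e := by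
  have hq0 : 0 ≤ γ / (1 - γ) * mnorm (P - Phat) :=
    mul_nonneg (div_nonneg hγ0 (by linarith)) (mnorm_nonneg _)
  simp only [vnorm_eq_norm] at hε ⊢
  exact norm_sub_perturbed_iterate_le hq0 hγ'.ne (varga_valueFn hγ0 hγ1 hP hPhat r)
    (norm_varga_sub_varga_le hγ0 hγ1 hPhat r) hV (fun k => hε (k + 1) k.succ_pos)
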